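/- arXiv:1904.09536 — 2 statements merged into one kernel-verified Lean document; each statement's English description precedes it below -/
import Mathlib

section
/- Let 0 < q < 1 and a, b ∈ ℂ, and for integers n, k define c_{n,k} = Σ_{ℓ=k}^{n} binom_q(n,ℓ)·binom_q(ℓ,k)·a^{n−ℓ}·b^{ℓ−k} when 0 ≤ k ≤ n, and c_{n,k} = 0 otherwise (in particular c_{−1,k} = 0). Then: (i) for all n ≥ 0 and all k ≥ 0: c_{n+1,k} = c_{n,k−1} + q^k·(a+b)·c_{n,k} − q^k·(1−q^n)·ab·c_{n−1,k}; and (ii) for all n ≥ 1 and all 0 ≤ k ≤ n: (1 − q^{k+1})·c_{n,k+1} = (1 − q^n)·c_{n−1,k}. -/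
noncomputable section

open scoped BigOperators

/-- The Gaussian (q-)binomial coefficient, characterized by
`qBinom q n 0 = 1`, `qBinom q 0 (k+1) = 0` and the Pascal-type rule
`qBinom q (n+1) (k+1) = q^(k+1) * qBinom q n (k+1) + qBinom q n k`. -/
def qBinom (q : ℂ) : ℕ → ℕ → ℂ
  | _, 0 => 1
  | 0, _ + 1 => 0
  | n + 1, k + 1 => q ^ (k + 1) * qBinom q n (k + 1) + qBinom q n k

/-- The connection coefficients, defined for all integer indices:
`c_{n,k} = Σ_{ℓ=k}^{n} binom_q(n,ℓ)·binom_q(ℓ,k)·a^{n-ℓ}·b^{ℓ-k}` when `0 ≤ k ≤ n`,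
and `c_{n,k} = 0` otherwise. -/
def cCoefZ (q a b : ℂ) (n k : ℤ) : ℂ :=
  if 0 ≤ k ∧ k ≤ n then
    ∑ ℓ ∈ Finset.Icc k.toNat n.toNat,
      qBinom q n.toNat ℓ * qBinom q ℓ k.toNat * a ^ (n.toNat - ℓ) * b ^ (ℓ - k.toNat)
  else 0


lemma qBinom_zero_right (q : ℂ) (n : ℕ) : qBinom q n 0 = 1 := by cases n <;> rfl
lemma qBinom_succ_succ (q : ℂ) (n k : ℕ) :
    qBinom q (n+1) (k+1) = q ^ (k + 1) * qBinom q n (k + 1) + qBinom q n k := rfl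
lemma qBinom_of_lt (q : ℂ) : ∀ {n k : ℕ}, n < k → qBinom q n k = 0 := by
  intro n
  induction n with
  | zero => intro k h; match k, h with | k+1, _ => rfl
  | succ n ih =>
    intro k h
    match k, h with
    | k+1, h =>
      rw [qBinom_succ_succ, ih (by omega), ih (by omega)]
      ring
lemma qBinom_self (q : ℂ) (n : ℕ) : qBinom q n n = 1 := by
  induction n with
  | zero => rfl
  | succ n ih => rw [qBinom_succ_succ, ih, qBinom_of_lt q (by omega)]; ring

def P (q : ℝ) (m : ℕ) : ℂ := ∏ i ∈ Finset.range m, (1 - (q:ℂ)^(i+1))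

variable {q : ℝ}

lemma one_sub_pow_ne (hq0 : 0 < q) (hq1 : q < 1) (m : ℕ) : (1:ℂ) - (q:ℂ)^(m+1) ≠ 0 := by
  have h4 : q^(m+1) < 1 := pow_lt_one₀ hq0.le hq1 (Nat.succ_ne_zero m)
  intro h
  have h2 : ((q^(m+1) : ℝ) : ℂ) = ((1:ℝ):ℂ) := by push_cast; linear_combination -h
  have h3 : q^(m+1) = 1 := by exact_mod_cast h2
  linarith

lemma P_ne_zero (hq0 : 0 < q) (hq1 : q < 1) (m : ℕ) : P q m ≠ 0 :=
  Finset.prod_ne_zero_iff.mpr (fun i _ => one_sub_pow_ne hq0 hq1 i)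

lemma P_succ (m : ℕ) : P q (m+1) = P q m * (1 - (q:ℂ)^(m+1)) := Finset.prod_range_succ _ _

lemma qBinom_eq (hq0 : 0 < q) (hq1 : q < 1) :
    ∀ n k : ℕ, k ≤ n → qBinom (q:ℂ) n k = P q n / (P q k * P q (n-k)) := by
  intro n
  induction n with
  | zero =>
    intro k hk
    interval_cases k
    simp [qBinom_zero_right, P]
  | succ n ih =>
    intro k hk
    match k with
    | 0 =>
      rw [qBinom_zero_right]
      have : P q 0 = 1 := by simp [P]
      rw [this, one_mul, Nat.sub_zero, div_self (P_ne_zero hq0 hq1 _)]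
    | k+1 =>
      rcases Nat.lt_or_ge k n with h | h
      · -- k+1 ≤ n
        rw [qBinom_succ_succ, ih (k+1) (by omega), ih k (by omega)]
        have e1 : n - k = (n - (k+1)) + 1 := by omega
        have e2 : n + 1 - (k+1) = (n - (k+1)) + 1 := by omega
        have e3 : (q:ℂ)^(n+1) = (q:ℂ)^(k+1) * (q:ℂ)^(n-(k+1)+1) := by
          rw [← pow_add]; congr 1; omega
        rw [e1, e2, P_succ (n - (k+1)), P_succ n, P_succ k, e3]
        have hPn := P_ne_zero hq0 hq1 n
        have hPk := P_ne_zero hq0 hq1 k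
        have hPd := P_ne_zero hq0 hq1 (n - (k+1))
        have h1 := one_sub_pow_ne hq0 hq1 k
        have h2 := one_sub_pow_ne hq0 hq1 (n - (k+1))
        field_simp
        ring
      · -- k = n
        have hk' : k = n := by omega
        subst hk'
        rw [qBinom_succ_succ, qBinom_of_lt (q:ℂ) (by omega), qBinom_self]
        have e : P q 0 = 1 := by simp [P]
        rw [Nat.sub_self, e, mul_one, div_self (P_ne_zero hq0 hq1 _)]
        ring

-- Identity A: (1 - q^(k+1)) * C(n+1,k+1) = (1 - q^(n+1)) * C(n,k)
lemma idA (hq0 : 0 < q) (hq1 : q < 1) (n k : ℕ) :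
    (1 - (q:ℂ)^(k+1)) * qBinom (q:ℂ) (n+1) (k+1) = (1 - (q:ℂ)^(n+1)) * qBinom (q:ℂ) n k := by
  rcases Nat.lt_or_ge n k with h | h
  · rw [qBinom_of_lt (q:ℂ) (by omega : n < k), qBinom_of_lt (q:ℂ) (by omega : n+1 < k+1)]
    ring
  · rw [qBinom_eq hq0 hq1 (n+1) (k+1) (by omega), qBinom_eq hq0 hq1 n k h]
    have e2 : n + 1 - (k+1) = n - k := by omega
    rw [e2, P_succ n, P_succ k]
    have hPn := P_ne_zero hq0 hq1 n
    have hPk := P_ne_zero hq0 hq1 k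
    have hPd := P_ne_zero hq0 hq1 (n - k)
    have h1 := one_sub_pow_ne hq0 hq1 k
    have h2 := one_sub_pow_ne hq0 hq1 n
    field_simp

-- Identity B: (1 - q^(n-k)) * C(n,k) = (1 - q^n) * C(n-1,k)
lemma idB (hq0 : 0 < q) (hq1 : q < 1) (n k : ℕ) :
    (1 - (q:ℂ)^(n-k)) * qBinom (q:ℂ) n k = (1 - (q:ℂ)^n) * qBinom (q:ℂ) (n-1) k := by
  match n with
  | 0 =>
    have : (0:ℕ) - k = 0 := by omega
    rw [this]
  | n+1 =>
    have e0 : n + 1 - 1 = n := by omega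
    rw [e0]
    rcases Nat.lt_or_ge n k with h | h
    · rcases Nat.lt_or_ge (n+1) k with h' | h'
      · rw [qBinom_of_lt (q:ℂ) h', qBinom_of_lt (q:ℂ) h]
        ring
      · -- k = n+1
        have hk : k = n+1 := by omega
        subst hk
        rw [Nat.sub_self, qBinom_of_lt (q:ℂ) h]
        simp
    · -- k ≤ n
      rw [qBinom_eq hq0 hq1 (n+1) k (by omega), qBinom_eq hq0 hq1 n k h]
      have e1 : n + 1 - k = (n - k) + 1 := by omega
      rw [e1, P_succ (n-k), P_succ n]
      have hPn := P_ne_zero hq0 hq1 n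
      have hPk := P_ne_zero hq0 hq1 k
      have hPd := P_ne_zero hq0 hq1 (n - k)
      have h1 := one_sub_pow_ne hq0 hq1 (n-k)
      have h2 := one_sub_pow_ne hq0 hq1 n
      have e3 : (q:ℂ)^(n+1) = (q:ℂ)^(n-k+1) * (q:ℂ)^k := by
        rw [← pow_add]; congr 1; omega
      rw [e3]
      field_simp

-- Vandermonde-type product: C(n,k+j) * C(k+j,k) = C(n,k) * C(n-k,j)
lemma prod_id (hq0 : 0 < q) (hq1 : q < 1) (k j i : ℕ) :
    qBinom (q:ℂ) (k+j+i) (k+j) * qBinom (q:ℂ) (k+j) k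
      = qBinom (q:ℂ) (k+j+i) k * qBinom (q:ℂ) (k+j+i-k) j := by
  rw [qBinom_eq hq0 hq1 _ _ (by omega), qBinom_eq hq0 hq1 _ _ (by omega),
      qBinom_eq hq0 hq1 _ _ (by omega)]
  have e1 : k + j + i - (k+j) = i := by omega
  have e2 : k + j + i - k = j + i := by omega
  have e3 : k + j - k = j := by omega
  rw [e1, e2, e3, qBinom_eq hq0 hq1 _ _ (by omega)]
  have e4 : j + i - j = i := by omega
  rw [e4]
  have h1 := P_ne_zero hq0 hq1 (k+j+i)
  have h2 := P_ne_zero hq0 hq1 (k+j)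
  have h3 := P_ne_zero hq0 hq1 (j+i)
  have h4 := P_ne_zero hq0 hq1 k
  have h5 := P_ne_zero hq0 hq1 j
  have h6 := P_ne_zero hq0 hq1 i
  field_simp

def H (q : ℝ) (a b : ℂ) (m : ℕ) : ℂ :=
  ∑ j ∈ Finset.range (m+1), qBinom (q:ℂ) m j * a^(m-j) * b^j

def G (q : ℝ) (a b : ℂ) (m : ℕ) : ℂ :=
  ∑ j ∈ Finset.range (m+1), (q:ℂ)^j * qBinom (q:ℂ) m j * a^(m-j) * b^j

lemma H_zero (a b : ℂ) : H q a b 0 = 1 := by simp [H, qBinom_zero_right]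

-- Step 1 : H(m+1) = a * G m + b * H m
lemma H_succ (a b : ℂ) (m : ℕ) : H q a b (m+1) = a * G q a b m + b * H q a b m := by
  rw [H, Finset.sum_range_succ' _ (m+1)]
  have e1 : ∀ j ∈ Finset.range (m+1),
      qBinom (q:ℂ) (m+1) (j+1) * a^(m+1-(j+1)) * b^(j+1)
        = ((q:ℂ)^(j+1) * qBinom (q:ℂ) m (j+1) * a^(m-j) * b^(j+1))
          + b * (qBinom (q:ℂ) m j * a^(m-j) * b^j) := by
    intro j hj
    rw [qBinom_succ_succ]
    have : m + 1 - (j+1) = m - j := by omega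
    rw [this]
    ring
  rw [Finset.sum_congr rfl e1, Finset.sum_add_distrib, ← Finset.mul_sum]
  have e2 : qBinom (q:ℂ) (m+1) 0 * a^(m+1-0) * b^0 = a^(m+1) := by
    rw [qBinom_zero_right, Nat.sub_zero]; ring
  rw [e2]
  have e3 : (∑ j ∈ Finset.range (m+1), (q:ℂ)^(j+1) * qBinom (q:ℂ) m (j+1) * a^(m-j) * b^(j+1))
      + a^(m+1) = a * G q a b m := by
    have e4 : a * G q a b m
        = ∑ j ∈ Finset.range (m+2), (q:ℂ)^j * qBinom (q:ℂ) m j * a^(m+1-j) * b^j := by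
      rw [Finset.sum_range_succ]
      rw [qBinom_of_lt (q:ℂ) (by omega : m < m+1), G, Finset.mul_sum]
      have : (∑ j ∈ Finset.range (m+1), a * ((q:ℂ)^j * qBinom (q:ℂ) m j * a^(m-j) * b^j))
          = ∑ j ∈ Finset.range (m+1), (q:ℂ)^j * qBinom (q:ℂ) m j * a^(m+1-j) * b^j := by
        refine Finset.sum_congr rfl fun j hj => ?_
        simp only [Finset.mem_range] at hj
        have : m + 1 - j = (m - j) + 1 := by omega
        rw [this, pow_succ]
        ring
      rw [this]
      ring
    rw [e4, Finset.sum_range_succ' _ (m+1)]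
    have e5 : ∀ j ∈ Finset.range (m+1),
        (q:ℂ)^(j+1) * qBinom (q:ℂ) m (j+1) * a^(m+1-(j+1)) * b^(j+1)
        = (q:ℂ)^(j+1) * qBinom (q:ℂ) m (j+1) * a^(m-j) * b^(j+1) := by
      intro j _
      have : m + 1 - (j+1) = m - j := by omega
      rw [this]
    rw [Finset.sum_congr rfl e5]
    simp [qBinom_zero_right]
  rw [H, Finset.mul_sum]
  linear_combination e3

-- Step 2 : H m - G m = (1 - q^m) * b * H (m-1)
lemma H_sub_G (hq0 : 0 < q) (hq1 : q < 1) (a b : ℂ) (m : ℕ) :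
    H q a b m - G q a b m = (1 - (q:ℂ)^m) * b * H q a b (m-1) := by
  match m with
  | 0 => simp [H_zero, G, qBinom_zero_right]
  | m+1 =>
    have e0 : m + 1 - 1 = m := by omega
    rw [e0]
    rw [H, G, ← Finset.sum_sub_distrib]
    have e1 : ∀ j ∈ Finset.range (m+2),
        (qBinom (q:ℂ) (m+1) j * a^(m+1-j) * b^j
          - (q:ℂ)^j * qBinom (q:ℂ) (m+1) j * a^(m+1-j) * b^j)
        = (1 - (q:ℂ)^j) * qBinom (q:ℂ) (m+1) j * a^(m+1-j) * b^j := by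
      intro j _; ring
    rw [Finset.sum_congr rfl e1, Finset.sum_range_succ' _ (m+1)]
    simp only [pow_zero, sub_self, zero_mul, add_zero]
    have e2 : ∀ j ∈ Finset.range (m+1),
        (1 - (q:ℂ)^(j+1)) * qBinom (q:ℂ) (m+1) (j+1) * a^(m+1-(j+1)) * b^(j+1)
        = (1 - (q:ℂ)^(m+1)) * b * (qBinom (q:ℂ) m j * a^(m-j) * b^j) := by
      intro j _
      have hA := idA hq0 hq1 m j
      have : m + 1 - (j+1) = m - j := by omega
      rw [this]
      linear_combination (a^(m-j) * b^(j+1)) * hA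
    rw [Finset.sum_congr rfl e2, ← Finset.mul_sum, H]

-- Rogers–Szegő recurrence
lemma RS (hq0 : 0 < q) (hq1 : q < 1) (a b : ℂ) (m : ℕ) :
    H q a b (m+1) = (a+b) * H q a b m - (1 - (q:ℂ)^m) * a * b * H q a b (m-1) := by
  have h1 := H_succ (q := q) a b m
  have h2 := H_sub_G hq0 hq1 a b m
  linear_combination h1 - a * h2

lemma sum_eq (hq0 : 0 < q) (hq1 : q < 1) (a b : ℂ) (n k : ℕ) (h : k ≤ n) :
    (∑ ℓ ∈ Finset.Icc k n, qBinom (q:ℂ) n ℓ * qBinom (q:ℂ) ℓ k * a^(n-ℓ) * b^(ℓ-k))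
    = qBinom (q:ℂ) n k * H q a b (n-k) := by
  obtain ⟨d, rfl⟩ : ∃ d, n = k + d := ⟨n - k, by omega⟩
  have hIcc : Finset.Icc k (k+d) = Finset.Ico k (k+d+1) := by
    rw [Finset.Ico_add_one_right_eq_Icc]
  rw [hIcc, Finset.sum_Ico_eq_sum_range]
  have e1 : k + d + 1 - k = d + 1 := by omega
  have e2 : k + d - k = d := by omega
  rw [e1, e2, H, Finset.mul_sum]
  refine Finset.sum_congr rfl fun j hj => ?_
  simp only [Finset.mem_range] at hj
  have hp := prod_id hq0 hq1 k j (d - j)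
  have e3 : k + j + (d - j) = k + d := by omega
  rw [e3, e2] at hp
  have e5 : k + d - (k + j) = d - j := by omega
  have e6 : k + j - k = j := by omega
  rw [e5, e6]
  calc qBinom (q:ℂ) (k+d) (k+j) * qBinom (q:ℂ) (k+j) k * a^(d-j) * b^j
      = (qBinom (q:ℂ) (k+d) (k+j) * qBinom (q:ℂ) (k+j) k) * a^(d-j) * b^j := by ring
    _ = (qBinom (q:ℂ) (k+d) k * qBinom (q:ℂ) d j) * a^(d-j) * b^j := by rw [hp]
    _ = qBinom (q:ℂ) (k+d) k * (qBinom (q:ℂ) d j * a^(d-j) * b^j) := by ring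

lemma main_i (hq0 : 0 < q) (hq1 : q < 1) (a b : ℂ) (n k : ℕ) :
    qBinom (q:ℂ) (n+1) (k+1) * H q a b (n-k)
      = qBinom (q:ℂ) n k * H q a b (n-k)
        + (q:ℂ)^(k+1) * (a+b) * (qBinom (q:ℂ) n (k+1) * H q a b (n-(k+1)))
        - (q:ℂ)^(k+1) * (1-(q:ℂ)^n) * a * b
            * (qBinom (q:ℂ) (n-1) (k+1) * H q a b (n-1-(k+1))) := by
  rcases Nat.lt_or_ge k n with h | h
  · rw [qBinom_succ_succ]
    have hRS := RS hq0 hq1 a b (n-(k+1))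
    have hB := idB hq0 hq1 n (k+1)
    have e : n - k = (n - (k+1)) + 1 := by omega
    have e7 : n - 1 - (k+1) = n - (k+1) - 1 := by omega
    rw [e, e7]
    linear_combination ((q:ℂ)^(k+1) * qBinom (q:ℂ) n (k+1)) * hRS
      - ((q:ℂ)^(k+1) * a * b * H q a b (n-(k+1)-1)) * hB
  · rcases Nat.lt_or_ge n k with h' | h'
    · rw [qBinom_of_lt (q:ℂ) (by omega : n+1 < k+1), qBinom_of_lt (q:ℂ) h',
          qBinom_of_lt (q:ℂ) (by omega : n < k+1), qBinom_of_lt (q:ℂ) (by omega : n-1 < k+1)]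
      ring
    · have hk : k = n := by omega
      subst hk
      rw [qBinom_self, qBinom_self, qBinom_of_lt (q:ℂ) (by omega : k < k+1),
          qBinom_of_lt (q:ℂ) (by omega : k-1 < k+1)]
      ring

lemma cCoef_nat (hq0 : 0 < q) (hq1 : q < 1) (a b : ℂ) (n k : ℕ) :
    cCoefZ (q:ℂ) a b (n:ℤ) (k:ℤ) = qBinom (q:ℂ) n k * H q a b (n-k) := by
  rcases le_or_gt k n with h | h
  · rw [cCoefZ, if_pos ⟨Int.ofNat_nonneg k, by exact_mod_cast h⟩]
    simp only [Int.toNat_natCast]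
    exact sum_eq hq0 hq1 a b n k h
  · rw [cCoefZ, if_neg (by push_cast; omega), qBinom_of_lt (q:ℂ) h, zero_mul]

lemma cCoef_neg (a b : ℂ) (k : ℤ) : cCoefZ (q:ℂ) a b (-1) k = 0 := by
  rw [cCoefZ, if_neg (by omega)]

lemma cCoef_neg_k (a b : ℂ) (n : ℤ) : cCoefZ (q:ℂ) a b n (-1) = 0 := by
  rw [cCoefZ, if_neg (by omega)]

theorem stmt17 (q : ℝ) (hq0 : 0 < q) (hq1 : q < 1) (a b : ℂ) :
    (∀ n k : ℕ,
      cCoefZ (q : ℂ) a b ((n : ℤ) + 1) (k : ℤ) =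
        cCoefZ (q : ℂ) a b (n : ℤ) ((k : ℤ) - 1)
          + (q : ℂ) ^ k * (a + b) * cCoefZ (q : ℂ) a b (n : ℤ) (k : ℤ)
          - (q : ℂ) ^ k * (1 - (q : ℂ) ^ n) * a * b * cCoefZ (q : ℂ) a b ((n : ℤ) - 1) (k : ℤ)) ∧
    (∀ n k : ℕ, 1 ≤ n → k ≤ n →
      (1 - (q : ℂ) ^ (k + 1)) * cCoefZ (q : ℂ) a b (n : ℤ) ((k : ℤ) + 1) =
        (1 - (q : ℂ) ^ n) * cCoefZ (q : ℂ) a b ((n : ℤ) - 1) (k : ℤ)) := by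
  constructor
  · intro n k
    have push1 : ((n:ℤ)+1) = ((n+1:ℕ):ℤ) := by push_cast; ring
    rw [push1, cCoef_nat hq0 hq1 a b (n+1) k, cCoef_nat hq0 hq1 a b n k]
    match n, k with
    | 0, 0 =>
      have h1 : ((0:ℕ):ℤ) - 1 = (-1 : ℤ) := by norm_num
      rw [h1, cCoef_neg, cCoef_neg_k]
      have hRS := RS hq0 hq1 a b 0
      simp only [Nat.sub_zero, qBinom_zero_right] at *
      norm_num
      linear_combination hRS
    | (m+1), 0 =>
      have h1 : ((0:ℕ):ℤ) - 1 = (-1:ℤ) := by norm_num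
      rw [h1]
      rw [cCoef_neg_k]
      have h2 : ((m+1:ℕ):ℤ) - 1 = ((m:ℕ):ℤ) := by push_cast; ring
      rw [h2, cCoef_nat hq0 hq1 a b m 0]
      have hRS := RS hq0 hq1 a b (m+1)
      simp only [Nat.sub_zero, qBinom_zero_right, Nat.add_sub_cancel] at *
      linear_combination hRS
    | 0, (j+1) =>
      have h1 : (((j+1:ℕ)):ℤ) - 1 = ((j:ℕ):ℤ) := by push_cast; ring
      have h2 : ((0:ℕ):ℤ) - 1 = (-1:ℤ) := by norm_num
      rw [h1, h2, cCoef_neg, cCoef_nat hq0 hq1 a b 0 j]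
      have hm := main_i hq0 hq1 a b 0 j
      have e1 : (0:ℕ) + 1 - (j+1) = 0 - j := by omega
      rw [e1]
      linear_combination hm
    | (m+1), (j+1) =>
      have h1 : (((j+1:ℕ)):ℤ) - 1 = ((j:ℕ):ℤ) := by push_cast; ring
      have h2 : ((m+1:ℕ):ℤ) - 1 = ((m:ℕ):ℤ) := by push_cast; ring
      rw [h1, h2, cCoef_nat hq0 hq1 a b (m+1) j, cCoef_nat hq0 hq1 a b m (j+1)]
      have hm := main_i hq0 hq1 a b (m+1) j
      have e1 : (m+1) + 1 - (j+1) = (m+1) - j := by omega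
      have e2 : (m+1) - 1 = m := by omega
      rw [e1]
      rw [e2] at hm
      linear_combination hm
  · intro n k h1 h2
    obtain ⟨m, rfl⟩ : ∃ m, n = m + 1 := ⟨n - 1, by omega⟩
    have p1 : ((k:ℤ)+1) = ((k+1:ℕ):ℤ) := by push_cast; ring
    have p2 : ((m+1:ℕ):ℤ) - 1 = ((m:ℕ):ℤ) := by push_cast; ring
    rw [p1, p2, cCoef_nat hq0 hq1 a b (m+1) (k+1), cCoef_nat hq0 hq1 a b m k]
    have hA := idA hq0 hq1 m k
    have e1 : (m+1) - (k+1) = m - k := by omega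
    rw [e1]
    linear_combination (H q a b (m - k)) * hA

end
end

section
/- Let 0 < q < 1, let a, b, c, d ∈ ℂ with a ≠ 0, and let n ≥ 0 be an integer with a·b·c·d·q^j ≠ 1 for all 0 ≤ j ≤ n. For k ≥ 0 define β_k = a^{−k}·Σ_{j=0}^{k} q^j·(q^{−k};q)_j·(ad;q)_j·(ac;q)_j / ((q;q)_j·(abcd;q)_j), and set β_{−1} = 0. Then: (1 − abcd·q^n)·β_{n+1} = (c + d − cd·(a+b)·q^n)·β_n − cd·(1 − q^n)·β_{n−1}. -/
set_option maxHeartbeats 4000000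

noncomputable section

open scoped BigOperators

/-- The q-Pochhammer symbol `(a;q)_n = ∏_{j=0}^{n-1} (1 - a q^j)`. -/
def qPoch (q a : ℂ) (n : ℕ) : ℂ := ∏ j ∈ Finset.range n, (1 - a * q ^ j)

/-- `β_k = a^{-k} Σ_{j=0}^{k} q^j (q^{-k};q)_j (ad;q)_j (ac;q)_j / ((q;q)_j (abcd;q)_j)`. -/
def betaCoef (q a b c d : ℂ) (k : ℕ) : ℂ :=
  a⁻¹ ^ k *
    ∑ j ∈ Finset.range (k + 1),
      q ^ j * qPoch q (q⁻¹ ^ k) j * qPoch q (a * d) j * qPoch q (a * c) j /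
        (qPoch q q j * qPoch q (a * b * c * d) j)

lemma qPoch_succ (q z : ℂ) (j : ℕ) :
    qPoch q z (j + 1) = qPoch q z j * (1 - z * q ^ j) :=
  Finset.prod_range_succ _ _

lemma qPoch_inv_zero {q : ℂ} (hq : q ≠ 0) {k j : ℕ} (hkj : k < j) :
    qPoch q (q⁻¹ ^ k) j = 0 := by
  apply Finset.prod_eq_zero (Finset.mem_range.mpr hkj)
  rw [inv_pow, inv_mul_cancel₀ (pow_ne_zero _ hq), sub_self]

lemma qPoch_shift {q : ℂ} (hq : q ≠ 0) (k : ℕ) : ∀ j : ℕ,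
    qPoch q (q⁻¹ ^ (k + 1)) j * (q ^ (k + 1) - q ^ j)
      = qPoch q (q⁻¹ ^ k) j * (q ^ (k + 1) - 1)
  | 0 => by simp [qPoch]
  | (j + 1) => by
    have ih := qPoch_shift hq k j
    have key : (1 - q⁻¹ ^ (k + 1) * q ^ j) * (q ^ (k + 1) - q ^ (j + 1))
        = (q ^ (k + 1) - q ^ j) * (1 - q⁻¹ ^ k * q ^ j) := by
      rw [inv_pow, inv_pow]
      field_simp
      ring
    rw [qPoch_succ, qPoch_succ]
    linear_combination (1 - q⁻¹ ^ k * q ^ j) * ih + (qPoch q (q⁻¹ ^ (k + 1)) j) * key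

theorem stmt18 (q : ℝ) (hq0 : 0 < q) (hq1 : q < 1)
    (a b c d : ℂ) (ha : a ≠ 0) (n : ℕ)
    (hsing : ∀ j : ℕ, j ≤ n → a * b * c * d * (q : ℂ) ^ j ≠ 1) :
    (1 - a * b * c * d * (q : ℂ) ^ n) * betaCoef (q : ℂ) a b c d (n + 1) =
      (c + d - c * d * (a + b) * (q : ℂ) ^ n) * betaCoef (q : ℂ) a b c d n
        - c * d * (1 - (q : ℂ) ^ n) * betaCoef (q : ℂ) a b c d (n - 1) := by
  have hqC : (q : ℂ) ≠ 0 := by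
    exact_mod_cast ne_of_gt hq0
  have hqlt : ∀ i : ℕ, 1 ≤ i → (1 : ℂ) - (q : ℂ) ^ i ≠ 0 := by
    intro i hi hzero
    have hcast : ((q ^ i : ℝ) : ℂ) = (q : ℂ) ^ i := by push_cast; ring
    have hR : (1 : ℝ) - q ^ i = 0 := by
      have h2 : ((1 - q ^ i : ℝ) : ℂ) = 0 := by push_cast; linear_combination hzero
      exact_mod_cast h2
    have hlt : q ^ i < 1 := pow_lt_one₀ (le_of_lt hq0) hq1 (by omega)
    linarith
  have hPq : ∀ j : ℕ, qPoch (q : ℂ) (q : ℂ) j ≠ 0 := by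
    intro j
    rw [qPoch]
    apply Finset.prod_ne_zero_iff.mpr
    intro i _ hzero
    exact hqlt (i + 1) (by omega) (by linear_combination hzero)
  have hPm : ∀ j : ℕ, j ≤ n + 1 → qPoch (q : ℂ) (a * b * c * d) j ≠ 0 := by
    intro j hj
    rw [qPoch]
    apply Finset.prod_ne_zero_iff.mpr
    intro i hi hzero
    rw [Finset.mem_range] at hi
    exact hsing i (by omega) (by linear_combination -hzero)
  rcases Nat.eq_zero_or_pos n with hn0 | hnpos
  · subst hn0
    have h1q : (1 : ℂ) - (q : ℂ) ≠ 0 := by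
      have := hqlt 1 le_rfl; simpa using this
    have h1m : (1 : ℂ) - a * b * c * d ≠ 0 := by
      intro hzero
      exact hsing 0 le_rfl (by simpa using (by linear_combination -hzero : a * b * c * d = 1))
    simp only [Nat.zero_sub, pow_zero, betaCoef, Finset.sum_range_succ, Finset.sum_range_zero,
      qPoch, Finset.prod_range_succ, Finset.prod_range_zero]
    field_simp
    have e1 : a * a⁻¹ = 1 := mul_inv_cancel₀ ha
    have e2 : (q : ℂ) * (q : ℂ)⁻¹ = 1 := mul_inv_cancel₀ hqC
    linear_combination (-(b * c * d) + b * c * d * (q : ℂ) - c * (q : ℂ) - d * (q : ℂ) + a * c * d * (q : ℂ) + c + d - a * c * d) * e1 + (a * a⁻¹ * c + a * a⁻¹ * d - a ^ 2 * a⁻¹ * c * d - a⁻¹) * e2 + a⁻¹ * 0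
  · obtain ⟨k, rfl⟩ : ∃ k, n = k + 1 := ⟨n - 1, by omega⟩
    have hQ2 : (q : ℂ) ^ (k + 2) - 1 ≠ 0 := fun h =>
      hqlt (k + 2) (by omega) (by linear_combination -h)
    have hQ1 : (q : ℂ) ^ (k + 1) - 1 ≠ 0 := fun h =>
      hqlt (k + 1) (by omega) (by linear_combination -h)
    set Gf : ℕ → ℂ := fun j =>
      ((q : ℂ) ^ (k + 1) * ((1 - (q : ℂ) ^ j) * ((q : ℂ) - a * b * c * d * (q : ℂ) ^ j)) *
          (qPoch (q : ℂ) ((q : ℂ)⁻¹ ^ (k + 2)) j * qPoch (q : ℂ) (a * d) j *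
            qPoch (q : ℂ) (a * c) j)) /
        (((q : ℂ) ^ (k + 2) - 1) *
          (qPoch (q : ℂ) (q : ℂ) j * qPoch (q : ℂ) (a * b * c * d) j)) with hGf
    have hcong : ∀ j ∈ Finset.range (k + 3),
        (1 - a * b * c * d * (q : ℂ) ^ (k + 1)) *
            ((q : ℂ) ^ j * qPoch (q : ℂ) ((q : ℂ)⁻¹ ^ (k + 2)) j * qPoch (q : ℂ) (a * d) j *
              qPoch (q : ℂ) (a * c) j /
              (qPoch (q : ℂ) (q : ℂ) j * qPoch (q : ℂ) (a * b * c * d) j))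
          - a * (c + d - c * d * (a + b) * (q : ℂ) ^ (k + 1)) *
            ((q : ℂ) ^ j * qPoch (q : ℂ) ((q : ℂ)⁻¹ ^ (k + 1)) j * qPoch (q : ℂ) (a * d) j *
              qPoch (q : ℂ) (a * c) j /
              (qPoch (q : ℂ) (q : ℂ) j * qPoch (q : ℂ) (a * b * c * d) j))
          - a ^ 2 * c * d * ((q : ℂ) ^ (k + 1) - 1) *
            ((q : ℂ) ^ j * qPoch (q : ℂ) ((q : ℂ)⁻¹ ^ k) j * qPoch (q : ℂ) (a * d) j *
              qPoch (q : ℂ) (a * c) j /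
              (qPoch (q : ℂ) (q : ℂ) j * qPoch (q : ℂ) (a * b * c * d) j))
          = Gf (j + 1) - Gf j := by
      intro j hj
      rw [Finset.mem_range] at hj
      by_cases hjk : j ≤ k + 1
      · have hmj : (1 : ℂ) - a * b * c * d * (q : ℂ) ^ j ≠ 0 := fun h =>
          hsing j (by omega) (by linear_combination -h)
        have hqj : (1 : ℂ) - (q : ℂ) * (q : ℂ) ^ j ≠ 0 := fun h =>
          hqlt (j + 1) (by omega) (by linear_combination h)
        have hmj' := hPm j (by omega)
        have hqj' := hPq j
        have hq2 : (q : ℂ) ^ (k + 2) ≠ 0 := pow_ne_zero _ hqC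
        have hD : qPoch (q : ℂ) (q : ℂ) j * qPoch (q : ℂ) (a * b * c * d) j ≠ 0 :=
          mul_ne_zero hqj' hmj'
        have hD2 : ((q : ℂ) ^ (k + 2) - 1) *
            (qPoch (q : ℂ) (q : ℂ) j * qPoch (q : ℂ) (a * b * c * d) j) ≠ 0 :=
          mul_ne_zero hQ2 hD
        have hred1 : qPoch (q : ℂ) ((q : ℂ)⁻¹ ^ (k + 2)) (j + 1) * (q : ℂ) ^ (k + 2)
            = qPoch (q : ℂ) ((q : ℂ)⁻¹ ^ (k + 2)) j * ((q : ℂ) ^ (k + 2) - (q : ℂ) ^ j) := by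
          rw [qPoch_succ]
          have hz : ((q : ℂ)⁻¹) ^ (k + 2) * (q : ℂ) ^ (k + 2) = 1 := by
            rw [inv_pow]; exact inv_mul_cancel₀ (pow_ne_zero _ hqC)
          linear_combination (-(qPoch (q : ℂ) ((q : ℂ)⁻¹ ^ (k + 2)) j * (q : ℂ) ^ j)) * hz
        have hred : Gf (j + 1) =
            (((q : ℂ) ^ (k + 2) - (q : ℂ) ^ j) * qPoch (q : ℂ) ((q : ℂ)⁻¹ ^ (k + 2)) j *
              qPoch (q : ℂ) (a * d) (j + 1) * qPoch (q : ℂ) (a * c) (j + 1)) /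
            (((q : ℂ) ^ (k + 2) - 1) *
              (qPoch (q : ℂ) (q : ℂ) j * qPoch (q : ℂ) (a * b * c * d) j)) := by
          simp only [hGf]
          rw [qPoch_succ (q : ℂ) (q : ℂ) j, qPoch_succ (q : ℂ) (a * b * c * d) j]
          rw [div_eq_div_iff (mul_ne_zero hQ2 (mul_ne_zero (mul_ne_zero hqj' hqj)
            (mul_ne_zero hmj' hmj))) hD2]
          linear_combination ((1 - (q : ℂ) * (q : ℂ) ^ j) * (1 - a * b * c * d * (q : ℂ) ^ j) *
            ((q : ℂ) ^ (k + 2) - 1) *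
            (qPoch (q : ℂ) (q : ℂ) j * qPoch (q : ℂ) (a * b * c * d) j) *
            (qPoch (q : ℂ) (a * d) (j + 1) * qPoch (q : ℂ) (a * c) (j + 1))) * hred1
        rw [hred]
        simp only [hGf]
        rw [qPoch_succ (q : ℂ) (a * d) j, qPoch_succ (q : ℂ) (a * c) j]
        simp only [← mul_div_assoc]
        rw [div_sub_div_same, div_sub_div_same, div_sub_div_same]
        rw [div_eq_div_iff hD hD2]
        have hp2 := qPoch_shift hqC (k + 1) j
        have hp3 := qPoch_shift hqC k j
        linear_combination (a * (c + d - c * d * (a + b) * (q : ℂ) ^ (k + 1)) * (q : ℂ) ^ j * qPoch (q : ℂ) (a * d) j * qPoch (q : ℂ) (a * c) j * qPoch (q : ℂ) (q : ℂ) j * qPoch (q : ℂ) (a * b * c * d) j + a ^ 2 * c * d * (q : ℂ) ^ j * qPoch (q : ℂ) (a * d) j * qPoch (q : ℂ) (a * c) j * ((q : ℂ) ^ (k + 1) - (q : ℂ) ^ j) * qPoch (q : ℂ) (q : ℂ) j * qPoch (q : ℂ) (a * b * c * d) j) * hp2 + (a ^ 2 * c * d * (q : ℂ) ^ j * qPoch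 (q : ℂ) (a * d) j * qPoch (q : ℂ) (a * c) j * ((q : ℂ) ^ (k + 2) - 1) * qPoch (q : ℂ) (q : ℂ) j * qPoch (q : ℂ) (a * b * c * d) j) * hp3
      · have hj2 : j = k + 2 := by omega
        subst hj2
        have hz2 : qPoch (q : ℂ) ((q : ℂ)⁻¹ ^ (k + 1)) (k + 2) = 0 :=
          qPoch_inv_zero hqC (by omega)
        have hz3 : qPoch (q : ℂ) ((q : ℂ)⁻¹ ^ k) (k + 2) = 0 :=
          qPoch_inv_zero hqC (by omega)
        have hzG : qPoch (q : ℂ) ((q : ℂ)⁻¹ ^ (k + 2)) (k + 2 + 1) = 0 :=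
          qPoch_inv_zero hqC (by omega)
        simp only [hGf]
        rw [hz2, hz3, hzG]
        simp only [zero_mul, mul_zero, zero_div, sub_zero, zero_sub]
        have hPqn := hPq (k + 2)
        have hPmn := hPm (k + 2) (by omega)
        have hD : qPoch (q : ℂ) (q : ℂ) (k + 2) * qPoch (q : ℂ) (a * b * c * d) (k + 2) ≠ 0 :=
          mul_ne_zero hPqn hPmn
        have hD2 : ((q : ℂ) ^ (k + 2) - 1) *
            (qPoch (q : ℂ) (q : ℂ) (k + 2) * qPoch (q : ℂ) (a * b * c * d) (k + 2)) ≠ 0 :=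
          mul_ne_zero hQ2 hD
        simp only [← mul_div_assoc]
        rw [← neg_div]
        rw [div_eq_div_iff hD hD2]
        ring
    have htel : ∑ j ∈ Finset.range (k + 3), (Gf (j + 1) - Gf j) = Gf (k + 3) - Gf 0 :=
      Finset.sum_range_sub Gf (k + 3)
    have hG0 : Gf 0 = 0 := by simp [hGf]
    have hGend : Gf (k + 3) = 0 := by
      have hz : qPoch (q : ℂ) ((q : ℂ)⁻¹ ^ (k + 2)) (k + 3) = 0 :=
        qPoch_inv_zero hqC (by omega)
      simp only [hGf]
      rw [hz]
      simp
    have hmain : (1 - a * b * c * d * (q : ℂ) ^ (k + 1)) *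
          (∑ j ∈ Finset.range (k + 3),
            (q : ℂ) ^ j * qPoch (q : ℂ) ((q : ℂ)⁻¹ ^ (k + 2)) j * qPoch (q : ℂ) (a * d) j *
              qPoch (q : ℂ) (a * c) j /
              (qPoch (q : ℂ) (q : ℂ) j * qPoch (q : ℂ) (a * b * c * d) j))
        - a * (c + d - c * d * (a + b) * (q : ℂ) ^ (k + 1)) *
          (∑ j ∈ Finset.range (k + 3),
            (q : ℂ) ^ j * qPoch (q : ℂ) ((q : ℂ)⁻¹ ^ (k + 1)) j * qPoch (q : ℂ) (a * d) j *
              qPoch (q : ℂ) (a * c) j /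
              (qPoch (q : ℂ) (q : ℂ) j * qPoch (q : ℂ) (a * b * c * d) j))
        - a ^ 2 * c * d * ((q : ℂ) ^ (k + 1) - 1) *
          (∑ j ∈ Finset.range (k + 3),
            (q : ℂ) ^ j * qPoch (q : ℂ) ((q : ℂ)⁻¹ ^ k) j * qPoch (q : ℂ) (a * d) j *
              qPoch (q : ℂ) (a * c) j /
              (qPoch (q : ℂ) (q : ℂ) j * qPoch (q : ℂ) (a * b * c * d) j)) = 0 := by
      rw [Finset.mul_sum, Finset.mul_sum, Finset.mul_sum, ← Finset.sum_sub_distrib,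
        ← Finset.sum_sub_distrib]
      rw [Finset.sum_congr rfl hcong, htel, hG0, hGend, sub_zero]
    -- peel off vanishing top terms of the two lower sums
    have hS2 : (∑ j ∈ Finset.range (k + 3),
        (q : ℂ) ^ j * qPoch (q : ℂ) ((q : ℂ)⁻¹ ^ (k + 1)) j * qPoch (q : ℂ) (a * d) j *
          qPoch (q : ℂ) (a * c) j /
          (qPoch (q : ℂ) (q : ℂ) j * qPoch (q : ℂ) (a * b * c * d) j))
        = ∑ j ∈ Finset.range (k + 2),
        (q : ℂ) ^ j * qPoch (q : ℂ) ((q : ℂ)⁻¹ ^ (k + 1)) j * qPoch (q : ℂ) (a * d) j *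
          qPoch (q : ℂ) (a * c) j /
          (qPoch (q : ℂ) (q : ℂ) j * qPoch (q : ℂ) (a * b * c * d) j) := by
      rw [Finset.sum_range_succ, qPoch_inv_zero hqC (show k + 1 < k + 2 by omega)]
      simp
    have hS3 : (∑ j ∈ Finset.range (k + 3),
        (q : ℂ) ^ j * qPoch (q : ℂ) ((q : ℂ)⁻¹ ^ k) j * qPoch (q : ℂ) (a * d) j *
          qPoch (q : ℂ) (a * c) j /
          (qPoch (q : ℂ) (q : ℂ) j * qPoch (q : ℂ) (a * b * c * d) j))
        = ∑ j ∈ Finset.range (k + 1),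
        (q : ℂ) ^ j * qPoch (q : ℂ) ((q : ℂ)⁻¹ ^ k) j * qPoch (q : ℂ) (a * d) j *
          qPoch (q : ℂ) (a * c) j /
          (qPoch (q : ℂ) (q : ℂ) j * qPoch (q : ℂ) (a * b * c * d) j) := by
      rw [Finset.sum_range_succ, qPoch_inv_zero hqC (show k < k + 2 by omega),
        Finset.sum_range_succ, qPoch_inv_zero hqC (show k < k + 1 by omega)]
      simp
    rw [hS2, hS3] at hmain
    -- relate sums to betaCoef
    have hpow : ∀ M : ℕ, ∀ z : ℂ, a ^ M * (a⁻¹ ^ M * z) = z := by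
      intro M z
      rw [← mul_assoc, ← mul_pow, mul_inv_cancel₀ ha, one_pow, one_mul]
    have hB2 : (∑ j ∈ Finset.range (k + 3),
        (q : ℂ) ^ j * qPoch (q : ℂ) ((q : ℂ)⁻¹ ^ (k + 2)) j * qPoch (q : ℂ) (a * d) j *
          qPoch (q : ℂ) (a * c) j /
          (qPoch (q : ℂ) (q : ℂ) j * qPoch (q : ℂ) (a * b * c * d) j))
        = a ^ (k + 2) * betaCoef (q : ℂ) a b c d (k + 2) := by
      rw [betaCoef, hpow]
    have hB1 : (∑ j ∈ Finset.range (k + 2),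
        (q : ℂ) ^ j * qPoch (q : ℂ) ((q : ℂ)⁻¹ ^ (k + 1)) j * qPoch (q : ℂ) (a * d) j *
          qPoch (q : ℂ) (a * c) j /
          (qPoch (q : ℂ) (q : ℂ) j * qPoch (q : ℂ) (a * b * c * d) j))
        = a ^ (k + 1) * betaCoef (q : ℂ) a b c d (k + 1) := by
      rw [betaCoef, hpow]
    have hB0 : (∑ j ∈ Finset.range (k + 1),
        (q : ℂ) ^ j * qPoch (q : ℂ) ((q : ℂ)⁻¹ ^ k) j * qPoch (q : ℂ) (a * d) j *
          qPoch (q : ℂ) (a * c) j /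
          (qPoch (q : ℂ) (q : ℂ) j * qPoch (q : ℂ) (a * b * c * d) j))
        = a ^ k * betaCoef (q : ℂ) a b c d k := by
      rw [betaCoef, hpow]
    rw [hB2, hB1, hB0] at hmain
    have hk1 : k + 1 + 1 = k + 2 := rfl
    have hk2 : k + 1 - 1 = k := rfl
    rw [hk1, hk2]
    apply mul_left_cancel₀ (pow_ne_zero (k + 2) ha)
    linear_combination hmain

end
end
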